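/- For every perfect binary tree T of height h, ψ_q(T) = (2^{h+2}/3) · (1 − (1/4)^{⌊h/2⌋+1}). -/

import Mathlib

open Finset SimpleGraph
open scoped Classical

/-- The closed neighborhood `N[v]` of `v` in `G`, as a finset. -/
noncomputable def closedNbhd {V : Type*} [Fintype V] (G : SimpleGraph V) (v : V) : Finset V :=
  Finset.univ.filter fun u => u = v ∨ G.Adj u v

/-- The degree of `v` in `G`. -/
noncomputable def deg {V : Type*} [Fintype V] (G : SimpleGraph V) (v : V) : ℕ :=
  (Finset.univ.filter fun u => G.Adj v u).card

/-- A coloring `c` is a quorum coloring if every vertex has at least half of its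
closed neighborhood in its own color class. -/
noncomputable def IsQuorumColoring {V : Type*} [Fintype V] (G : SimpleGraph V) (c : V → ℕ) : Prop :=
  ∀ v : V, (closedNbhd G v).card ≤ 2 * ((closedNbhd G v).filter fun u => c u = c v).card

/-- Number of color classes (distinct used colors) of a coloring. -/
noncomputable def numClasses {V : Type*} [Fintype V] (c : V → ℕ) : ℕ :=
  (Finset.univ.image c).card

/-- The quorum coloring number `ψ_q(G)`. -/
noncomputable def quorumNumber {V : Type*} [Fintype V] (G : SimpleGraph V) : ℕ :=
  sSup {k | ∃ c : V → ℕ, IsQuorumColoring G c ∧ numClasses c = k}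

/-- A coloring is cost-effective if every vertex meets the quorum bound with equality:
`|N[v] ∩ π(v)| = ⌈|N[v]|/2⌉`. -/
noncomputable def IsCostEffective {V : Type*} [Fintype V] (G : SimpleGraph V) (c : V → ℕ) : Prop :=
  ∀ v : V, ((closedNbhd G v).filter fun u => c u = c v).card = ((closedNbhd G v).card + 1) / 2

/-- The matching number of a graph: the largest number of edges in a matching. -/
noncomputable def matchingNumber {W : Type*} (H : SimpleGraph W) : ℕ :=
  sSup {k | ∃ M : H.Subgraph, M.IsMatching ∧ M.edgeSet.ncard = k}

/-!
Let `E` be the set of vertices whose depth has the parity of `h`; it is independent and contains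
the leaves. A vertex outside `E` has two children, so a quorum coloring gives it a neighbour of its
own color, which lies in `E`; every class therefore meets `E` and `ψ_q(T) ≤ |E|`. Conversely, going
down from the root, let every vertex that has not joined its parent's class take its first child
into its own class. Every class is a vertex or an edge, every vertex of degree at least two lies in
an edge class and all degrees are at most three, so this is a quorum coloring; as `E` is
independent, its vertices lie in distinct classes and `ψ_q(T) ≥ |E|`. Finally `|E|` is the sum of
`2^d` over the depths `d ≤ h` with `d ≡ h (mod 2)`.
-/

section Quorum

variable {V : Type*} [Fintype V] {G : SimpleGraph V}

lemma card_closedNbhd (v : V) : (closedNbhd G v).card = deg G v + 1 := by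
  have : closedNbhd G v = insert v (univ.filter fun u => G.Adj v u) := by
    ext u
    simp [closedNbhd, adj_comm]
  rw [this, card_insert_of_notMem (by simp), deg]

lemma IsQuorumColoring.exists_adj_eq {c : V → ℕ} (hc : IsQuorumColoring G c) {v : V}
    (hv : 2 ≤ deg G v) : ∃ u, G.Adj v u ∧ c u = c v := by
  by_contra! hno
  have hsub : (closedNbhd G v).filter (fun u => c u = c v) ⊆ {v} := by
    intro u hu
    simp only [closedNbhd, mem_filter, mem_univ, true_and] at hu
    obtain ⟨rfl | hadj, hcu⟩ := hu
    · exact mem_singleton_self u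
    · exact absurd hcu (hno u hadj.symm)
  have hquorum := hc v
  rw [card_closedNbhd] at hquorum
  have := card_le_card hsub
  rw [card_singleton] at this
  omega

lemma isQuorumColoring_of_exists_adj_eq {c : V → ℕ} (hdeg : ∀ v, deg G v ≤ 3)
    (hc : ∀ v, deg G v ≤ 1 ∨ ∃ u, G.Adj v u ∧ c u = c v) : IsQuorumColoring G c := by
  intro v
  rw [card_closedNbhd]
  rcases hc v with hv | ⟨u, hadj, hcu⟩
  · have : 1 ≤ ((closedNbhd G v).filter fun u => c u = c v).card :=
      card_pos.2 ⟨v, by simp [closedNbhd]⟩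
    omega
  · have hsub : {v, u} ⊆ (closedNbhd G v).filter fun w => c w = c v := by
      intro w hw
      rcases mem_insert.1 hw with rfl | hw
      · simp [closedNbhd]
      · rw [mem_singleton.1 hw]
        simp [closedNbhd, hadj.symm, hcu]
    have := card_le_card hsub
    rw [card_pair hadj.ne] at this
    have := hdeg v
    omega

lemma numClasses_le_card {c : V → ℕ} {S : Finset V} (hS : ∀ v ∉ S, ∃ u ∈ S, c u = c v) :
    numClasses c ≤ S.card := by
  have : univ.image c ⊆ S.image c := by
    intro k hk
    obtain ⟨v, -, rfl⟩ := mem_image.1 hk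
    by_cases hv : v ∈ S
    · exact mem_image_of_mem c hv
    · obtain ⟨u, hu, hcu⟩ := hS v hv
      exact mem_image.2 ⟨u, hu, hcu⟩
  exact (card_le_card this).trans card_image_le

lemma card_le_numClasses {c : V → ℕ} {S : Finset V} (hc : Set.InjOn c S) :
    S.card ≤ numClasses c :=
  card_le_card_of_injOn c (fun v _ => mem_image_of_mem c (mem_univ v)) hc

lemma quorumNumber_eq {k : ℕ} (hlo : ∃ c, IsQuorumColoring G c ∧ k ≤ numClasses c)
    (hup : ∀ c, IsQuorumColoring G c → numClasses c ≤ k) : quorumNumber G = k := by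
  obtain ⟨c, hc, hk⟩ := hlo
  refine IsGreatest.csSup_eq ⟨⟨c, hc, le_antisymm (hup c hc) hk⟩, ?_⟩
  rintro _ ⟨c', hc', rfl⟩
  exact hup c' hc'

end Quorum

section Tree

variable {V : Type*} {G : SimpleGraph V} {r u v : V}

theorem SimpleGraph.IsTree.eq_of_adj_of_dist_add_one (hT : G.IsTree) {u₁ u₂ : V}
    (h₁ : G.Adj u₁ v) (hd₁ : G.dist r u₁ + 1 = G.dist r v)
    (h₂ : G.Adj u₂ v) (hd₂ : G.dist r u₂ + 1 = G.dist r v) : u₁ = u₂ := by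
  obtain ⟨q, hq, -⟩ := hT.connected.exists_path_of_dist r v
  have key : ∀ u, G.Adj u v → G.dist r u + 1 = G.dist r v → u = q.penultimate := by
    intro u hu hd
    obtain ⟨p, hp, hpl⟩ := hT.connected.exists_path_of_dist r u
    refine hT.isAcyclic.eq_penultimate_of_adj_end hq hu.symm ?_
    by_contra hnot
    -- otherwise `v` lies on a shortest path from `r` to `u`, so it is closer to `r` than `u`
    have hv := hT.isAcyclic.mem_support_of_ne_mem_support_of_adj_of_isPath hp hq hu hnot
    have := G.dist_le (p.takeUntil v hv)
    have := p.length_takeUntil_le_length hv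
    omega
  rw [key u₁ h₁ hd₁, key u₂ h₂ hd₂]

theorem SimpleGraph.IsTree.exists_adj_dist_add_one (hT : G.IsTree) (hv : v ≠ r) :
    ∃ u, G.Adj u v ∧ G.dist r u + 1 = G.dist r v := by
  obtain ⟨p, -, hp⟩ := hT.connected.exists_path_of_dist v r
  have hnil : ¬ p.Nil := Walk.not_nil_of_ne hv
  refine ⟨p.snd, (p.adj_snd hnil).symm, ?_⟩
  have := p.length_tail_add_one hnil
  have := G.dist_le p.tail
  rw [dist_comm] at hp this
  rcases hT.dist_eq_dist_add_one_of_adj r (p.adj_snd hnil) with hd | hd <;> omega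

noncomputable def parent (G : SimpleGraph V) (r v : V) : V :=
  if h : ∃ u, G.Adj u v ∧ G.dist r u + 1 = G.dist r v then h.choose else v

lemma parent_spec (hT : G.IsTree) (hv : v ≠ r) :
    G.Adj (parent G r v) v ∧ G.dist r (parent G r v) + 1 = G.dist r v := by
  have h := hT.exists_adj_dist_add_one hv
  rw [parent, dif_pos h]
  exact h.choose_spec

lemma parent_eq (hT : G.IsTree) (hu : G.Adj u v) (hd : G.dist r u + 1 = G.dist r v) :
    parent G r v = u := by
  have hv : v ≠ r := by
    rintro rfl
    simp at hd
  exact hT.eq_of_adj_of_dist_add_one (parent_spec hT hv).1 (parent_spec hT hv).2 hu hd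

variable [Fintype V]

noncomputable def children (G : SimpleGraph V) (r v : V) : Finset V :=
  univ.filter fun u => G.Adj v u ∧ G.dist r u = G.dist r v + 1

lemma mem_children : u ∈ children G r v ↔ G.Adj v u ∧ G.dist r u = G.dist r v + 1 := by
  simp [children]

lemma parent_eq_of_mem_children (hT : G.IsTree) (hu : u ∈ children G r v) :
    parent G r u = v :=
  parent_eq hT (mem_children.1 hu).1 (mem_children.1 hu).2.symm

lemma card_children_le_deg : (children G r v).card ≤ deg G v :=
  card_le_card fun u hu => mem_filter.2 ⟨mem_univ u, (mem_children.1 hu).1⟩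

lemma deg_le_card_children_add_one (hT : G.IsTree) (r v : V) :
    deg G v ≤ (children G r v).card + 1 := by
  have : univ.filter (fun u => G.Adj v u) ⊆ insert (parent G r v) (children G r v) := by
    intro u hu
    rw [mem_filter] at hu
    rcases hT.dist_eq_dist_add_one_of_adj r hu.2 with hd | hd
    · exact mem_insert.2 (Or.inl (parent_eq hT hu.2.symm hd.symm).symm)
    · exact mem_insert_of_mem (mem_children.2 ⟨hu.2, hd⟩)
  exact (card_le_card this).trans (card_insert_le _ _)

end Tree

section PerfectBinaryTree

variable {V : Type*} [Fintype V] {G : SimpleGraph V} {r v : V} {h : ℕ}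

structure IsPerfectBinaryTree (G : SimpleGraph V) (r : V) (h : ℕ) : Prop where
  isTree : G.IsTree
  dist_le : ∀ v, G.dist r v ≤ h
  card_children : ∀ v, G.dist r v < h → (children G r v).card = 2

namespace IsPerfectBinaryTree

lemma card_children_eq_zero (hP : IsPerfectBinaryTree G r h) (hv : G.dist r v = h) :
    (children G r v).card = 0 := by
  rw [card_eq_zero, eq_empty_iff_forall_notMem]
  intro u hu
  have := hP.dist_le u
  rw [mem_children] at hu
  omega

lemma deg_le_three (hP : IsPerfectBinaryTree G r h) (v : V) : deg G v ≤ 3 := by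
  have := deg_le_card_children_add_one hP.isTree r v
  rcases (hP.dist_le v).lt_or_eq with hv | hv
  · rw [hP.card_children v hv] at this
    omega
  · rw [hP.card_children_eq_zero hv] at this
    omega

lemma deg_le_one (hP : IsPerfectBinaryTree G r h) (hv : G.dist r v = h) : deg G v ≤ 1 := by
  have := deg_le_card_children_add_one hP.isTree r v
  rwa [hP.card_children_eq_zero hv] at this

lemma two_le_deg (hP : IsPerfectBinaryTree G r h) (hv : G.dist r v < h) : 2 ≤ deg G v :=
  hP.card_children v hv ▸ card_children_le_deg

lemma card_level (hP : IsPerfectBinaryTree G r h) {d : ℕ} (hd : d ≤ h) :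
    (univ.filter fun v => G.dist r v = d).card = 2 ^ d := by
  induction d with
  | zero =>
    have : univ.filter (fun v => G.dist r v = 0) = {r} := by
      ext v
      simp [hP.isTree.connected.dist_eq_zero_iff, eq_comm]
    rw [this, card_singleton, pow_zero]
  | succ d ih =>
    have hlevel : univ.filter (fun v => G.dist r v = d + 1) =
        (univ.filter fun v => G.dist r v = d).biUnion (children G r) := by
      ext v
      simp only [mem_filter, mem_univ, true_and, mem_biUnion, mem_children]
      constructor
      · intro hv
        have hvr : v ≠ r := by
          rintro rfl
          simp at hv
        obtain ⟨hadj, hpd⟩ := parent_spec hP.isTree hvr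
        exact ⟨parent G r v, by omega, hadj, by omega⟩
      · rintro ⟨w, rfl, -, hv⟩
        exact hv
    have hdisj : (univ.filter fun v => G.dist r v = d : Set V).PairwiseDisjoint (children G r) :=
      fun v _ w _ hvw => disjoint_left.2 fun u hv hw =>
        hvw ((parent_eq_of_mem_children hP.isTree hv).symm.trans
          (parent_eq_of_mem_children hP.isTree hw))
    rw [hlevel, card_biUnion hdisj, sum_congr rfl fun w hw => hP.card_children w ?_, sum_const,
      ih (by omega), smul_eq_mul, pow_succ]
    rw [mem_filter] at hw
    omega

end IsPerfectBinaryTree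

noncomputable def evenHeightVerts (G : SimpleGraph V) (r : V) (h : ℕ) : Finset V :=
  univ.filter fun v => G.dist r v % 2 = h % 2

namespace IsPerfectBinaryTree

lemma card_evenHeightVerts (hP : IsPerfectBinaryTree G r h) :
    (evenHeightVerts G r h).card = ∑ d ∈ (range (h + 1)).filter (· % 2 = h % 2), 2 ^ d := by
  rw [card_eq_sum_card_fiberwise (f := G.dist r)]
  · refine sum_congr rfl fun d hd => ?_
    rw [mem_filter, mem_range] at hd
    rw [← hP.card_level (by omega : d ≤ h), evenHeightVerts, filter_filter]
    congr 1
    ext v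
    simp only [mem_filter, mem_univ, true_and]
    constructor
    · exact And.right
    · rintro rfl
      exact ⟨hd.2, rfl⟩
  · intro v hv
    rw [mem_coe, evenHeightVerts, mem_filter] at hv
    exact mem_filter.2 ⟨mem_range.2 (Nat.lt_succ_of_le (hP.dist_le v)), hv.2⟩

lemma numClasses_le {c : V → ℕ} (hP : IsPerfectBinaryTree G r h) (hc : IsQuorumColoring G c) :
    numClasses c ≤ (evenHeightVerts G r h).card := by
  refine numClasses_le_card fun v hv => ?_
  simp only [evenHeightVerts, mem_filter, mem_univ, true_and] at hv ⊢
  have hvh : G.dist r v < h := by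
    have := hP.dist_le v
    rcases this.lt_or_eq with h₁ | rfl
    · exact h₁
    · exact absurd rfl hv
  obtain ⟨u, hadj, hcu⟩ := hc.exists_adj_eq (hP.two_le_deg hvh)
  refine ⟨u, ?_, hcu⟩
  rcases hP.isTree.dist_eq_dist_add_one_of_adj r hadj with hd | hd <;> omega

end IsPerfectBinaryTree

end PerfectBinaryTree

section Leader

variable {V : Type*} [Fintype V] {G : SimpleGraph V} {r v : V}

noncomputable def firstChild (G : SimpleGraph V) (r v : V) : V :=
  if h : (children G r v).Nonempty then h.choose else v

lemma firstChild_mem (hv : (children G r v).Nonempty) : firstChild G r v ∈ children G r v := by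
  rw [firstChild, dif_pos hv]
  exact hv.choose_spec

noncomputable def joinsParentUpTo (G : SimpleGraph V) (r : V) : ℕ → V → Prop
  | 0, _ => False
  | n + 1, v => v = firstChild G r (parent G r v) ∧ ¬ joinsParentUpTo G r n (parent G r v)

def JoinsParent (G : SimpleGraph V) (r v : V) : Prop :=
  joinsParentUpTo G r (G.dist r v) v

lemma not_joinsParent_root : ¬ JoinsParent G r r := by
  simp [JoinsParent, joinsParentUpTo]

lemma joinsParent_iff (hT : G.IsTree) (hv : v ≠ r) :
    JoinsParent G r v ↔ v = firstChild G r (parent G r v) ∧ ¬ JoinsParent G r (parent G r v) := by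
  rw [JoinsParent, ← (parent_spec hT hv).2]
  rfl

lemma JoinsParent.ne_root (hv : JoinsParent G r v) : v ≠ r := by
  rintro rfl
  exact not_joinsParent_root hv

noncomputable def leader (G : SimpleGraph V) (r v : V) : V :=
  if JoinsParent G r v then parent G r v else v

lemma leader_of_joinsParent (hv : JoinsParent G r v) : leader G r v = parent G r v :=
  if_pos hv

lemma leader_of_not_joinsParent (hv : ¬ JoinsParent G r v) : leader G r v = v :=
  if_neg hv

lemma SimpleGraph.IsTree.injOn_leader (hT : G.IsTree) {S : Set V}
    (hS : ∀ u ∈ S, ∀ v ∈ S, ¬ G.Adj u v) : Set.InjOn (leader G r) S := by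
  intro u hu v hv huv
  by_cases hju : JoinsParent G r u <;> by_cases hjv : JoinsParent G r v
  · rw [((joinsParent_iff hT hju.ne_root).1 hju).1, ((joinsParent_iff hT hjv.ne_root).1 hjv).1,
      ← leader_of_joinsParent hju, ← leader_of_joinsParent hjv, huv]
  · rw [leader_of_joinsParent hju, leader_of_not_joinsParent hjv] at huv
    exact absurd (huv ▸ (parent_spec hT hju.ne_root).1) (hS v hv u hu)
  · rw [leader_of_not_joinsParent hju, leader_of_joinsParent hjv] at huv
    exact absurd (huv ▸ (parent_spec hT hjv.ne_root).1) (hS u hu v hv)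
  · rwa [leader_of_not_joinsParent hju, leader_of_not_joinsParent hjv] at huv

end Leader

namespace IsPerfectBinaryTree

variable {V : Type*} [Fintype V] {G : SimpleGraph V} {r : V} {h : ℕ}

lemma exists_adj_leader_eq (hP : IsPerfectBinaryTree G r h) (v : V) :
    deg G v ≤ 1 ∨ ∃ u, G.Adj v u ∧ leader G r u = leader G r v := by
  have hT := hP.isTree
  by_cases hj : JoinsParent G r v
  · refine Or.inr ⟨parent G r v, (parent_spec hT hj.ne_root).1.symm, ?_⟩
    rw [leader_of_not_joinsParent ((joinsParent_iff hT hj.ne_root).1 hj).2,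
      leader_of_joinsParent hj]
  rcases (hP.dist_le v).lt_or_eq with hvh | hvh
  · have hne : (children G r v).Nonempty := card_pos.1 (by rw [hP.card_children v hvh]; norm_num)
    have hw := firstChild_mem hne
    have hpar := parent_eq_of_mem_children hT hw
    have hwr : firstChild G r v ≠ r := by
      intro hwr
      have := (mem_children.1 hw).2
      rw [hwr, dist_self] at this
      omega
    have hjw : JoinsParent G r (firstChild G r v) :=
      (joinsParent_iff hT hwr).2 ⟨by rw [hpar], by rwa [hpar]⟩
    refine Or.inr ⟨_, (mem_children.1 hw).1, ?_⟩
    rw [leader_of_joinsParent hjw, hpar, leader_of_not_joinsParent hj]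
  · exact Or.inl (hP.deg_le_one hvh)

lemma exists_isQuorumColoring (hP : IsPerfectBinaryTree G r h) :
    ∃ c, IsQuorumColoring G c ∧ (evenHeightVerts G r h).card ≤ numClasses c := by
  refine ⟨fun v => Fintype.equivFin V (leader G r v),
    isQuorumColoring_of_exists_adj_eq hP.deg_le_three fun v => ?_, card_le_numClasses ?_⟩
  · rcases hP.exists_adj_leader_eq v with hv | ⟨u, hadj, hu⟩
    · exact Or.inl hv
    · exact Or.inr ⟨u, hadj, by rw [hu]⟩
  · refine (Fin.val_injective.comp (Fintype.equivFin V).injective).comp_injOn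
      (hP.isTree.injOn_leader fun u hu v hv hadj => ?_)
    simp only [evenHeightVerts, coe_filter, mem_univ, true_and, Set.mem_ofPred_eq] at hu hv
    rcases hP.isTree.dist_eq_dist_add_one_of_adj r hadj with hd | hd <;> omega

end IsPerfectBinaryTree

lemma sum_range_filter_mod_two_two_pow (h : ℕ) :
    ∑ d ∈ (range (h + 1)).filter (· % 2 = h % 2), (2 : ℚ) ^ d =
      2 ^ (h + 2) / 3 * (1 - (1 / 4) ^ (h / 2 + 1)) := by
  induction h using Nat.twoStepInduction with
  | zero => norm_num [sum_filter]
  | one => norm_num [sum_filter, sum_range_succ]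
  | more n ih _ =>
    have : (range (n + 2 + 1)).filter (· % 2 = (n + 2) % 2) =
        insert (n + 2) ((range (n + 1)).filter (· % 2 = n % 2)) := by
      ext d
      simp only [mem_filter, mem_range, mem_insert]
      omega
    rw [this, sum_insert (by simp), ih, show (n + 2) / 2 = n / 2 + 1 by omega]
    ring

/-- for a perfect binary tree of height `h`,
`ψ_q(T) = (2^{h+2}/3) · (1 − (1/4)^{⌊h/2⌋+1})`. -/
theorem quorumNumber_perfect_binary_tree {V : Type*} [Fintype V] (G : SimpleGraph V)
    (r : V) (h : ℕ) (hT : G.IsTree)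
    (hdepth : ∀ v : V, G.dist r v ≤ h)
    (hchild : ∀ v : V, G.dist r v < h →
        (Finset.univ.filter fun u => G.Adj v u ∧ G.dist r u = G.dist r v + 1).card = 2) :
    (quorumNumber G : ℚ) = 2 ^ (h + 2) / 3 * (1 - (1 / 4 : ℚ) ^ (h / 2 + 1)) := by
  have hP : IsPerfectBinaryTree G r h := ⟨hT, hdepth, hchild⟩
  rw [quorumNumber_eq hP.exists_isQuorumColoring fun c hc => hP.numClasses_le hc,
    hP.card_evenHeightVerts, Nat.cast_sum, ← sum_range_filter_mod_two_two_pow]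
  push_cast
  rfl
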